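/- arXiv:1610.09809 — 2 statements merged into one kernel-verified Lean document; each statement's English description precedes it below -/
import Mathlib

section
/- Let Γ be a totally ordered abelian group, Γ' ⊆ Γ a convex subgroup with quotient Γ'' = Γ/Γ' (with quotient order), and k a field. Then the localization k[[Γ]]_{p_{Γ'}} of the generalized power series ring at the prime ideal p_{Γ'} corresponding to Γ' is a valuation ring of k((Γ)) whose value group is isomorphic to Γ''; concretely, it consists of all Laurent series whose minimal support element lies in Γ_{≥0} ∪ Γ'. -/
/-!
Put `S = Γ_{≥0} ∪ Γ'`. Convexity of `Γ'` makes `S` closed under addition, and since `Γ` is totally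
ordered, `γ ∈ S` or `-γ ∈ S` for every `γ`. As `order` turns products of nonzero series into sums
and `order (f + g) ≥ min (order f) (order g)`, the series with order in `S` form a valuation ring
`V` of `k((Γ))`. The units of `V` are the series with order in `S ∩ -S = Γ'`, so `order` induces
`k((Γ))ˣ / Vˣ ≃ Γ ⧸ Γ'`; and a series of order `γ ∈ Γ'` lands in `k[[Γ]]` after multiplication by
`t^{-γ} ∉ p_{Γ'}`.
-/

namespace ValuationSubring

variable {K : Type*} [Field K]

theorem mem_unitGroup_iff_mem_and_inv_mem (A : ValuationSubring K) (u : Kˣ) :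
    u ∈ A.unitGroup ↔ (u : K) ∈ A ∧ (u : K)⁻¹ ∈ A := by
  rw [mem_unitGroup_iff, ← A.valuation_le_one_iff, ← A.valuation_le_one_iff,
    ← A.valuation.one_le_val_iff u.ne_zero, le_antisymm_iff]

end ValuationSubring

namespace AddSubmonoid

variable {Γ : Type*} [AddCommGroup Γ] [PartialOrder Γ] [IsOrderedAddMonoid Γ]

theorem mem_of_le {S : AddSubmonoid Γ} (hS : ∀ γ, 0 ≤ γ → γ ∈ S) {a b : Γ} (ha : a ∈ S)
    (hab : a ≤ b) : b ∈ S := by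
  simpa using S.add_mem ha (hS _ (sub_nonneg.2 hab))

end AddSubmonoid

namespace AddSubgroup

variable {Γ : Type*} [AddCommGroup Γ] [LinearOrder Γ] (Γ' : AddSubgroup Γ)

theorem nonneg_or_mem_of_le (hΓ' : (Γ' : Set Γ).OrdConnected) {a b : Γ} (ha : a ∈ Γ')
    (hab : a ≤ b) : 0 ≤ b ∨ b ∈ Γ' := by
  rcases le_or_gt 0 b with hb | hb
  · exact Or.inl hb
  · exact Or.inr (hΓ'.out ha Γ'.zero_mem ⟨hab, hb.le⟩)

variable [IsOrderedAddMonoid Γ]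

def nonnegUnion (hΓ' : (Γ' : Set Γ).OrdConnected) : AddSubmonoid Γ where
  carrier := {γ | 0 ≤ γ ∨ γ ∈ Γ'}
  zero_mem' := Or.inl le_rfl
  add_mem' := by
    rintro a b (ha | ha) (hb | hb)
    · exact Or.inl (add_nonneg ha hb)
    · exact Γ'.nonneg_or_mem_of_le hΓ' hb (le_add_of_nonneg_left ha)
    · exact Γ'.nonneg_or_mem_of_le hΓ' ha (le_add_of_nonneg_right hb)
    · exact Or.inr (Γ'.add_mem ha hb)

theorem mem_nonnegUnion (hΓ' : (Γ' : Set Γ).OrdConnected) {γ : Γ} :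
    γ ∈ Γ'.nonnegUnion hΓ' ↔ 0 ≤ γ ∨ γ ∈ Γ' :=
  Iff.rfl

theorem nonneg_mem_nonnegUnion (hΓ' : (Γ' : Set Γ).OrdConnected) (γ : Γ) (hγ : 0 ≤ γ) :
    γ ∈ Γ'.nonnegUnion hΓ' :=
  Or.inl hγ

theorem mem_and_neg_mem_nonnegUnion_iff (hΓ' : (Γ' : Set Γ).OrdConnected) {γ : Γ} :
    γ ∈ Γ'.nonnegUnion hΓ' ∧ -γ ∈ Γ'.nonnegUnion hΓ' ↔ γ ∈ Γ' := by
  simp only [mem_nonnegUnion, neg_nonneg, neg_mem_iff]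
  constructor
  · rintro ⟨h | h, h' | h'⟩
    · exact le_antisymm h' h ▸ Γ'.zero_mem
    all_goals assumption
  · intro h
    exact ⟨Or.inr h, Or.inr h⟩

end AddSubgroup

namespace HahnSeries

section Order

variable {Γ : Type*} [Zero Γ] [LinearOrder Γ] {R : Type*} [Zero R]

theorem support_nonneg_iff {f : HahnSeries Γ R} : (∀ γ ∈ f.support, 0 ≤ γ) ↔ 0 ≤ f.order := by
  refine ⟨fun h => ?_, fun h γ hγ => h.trans (order_le_of_coeff_ne_zero hγ)⟩
  rcases eq_or_ne f 0 with rfl | hf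
  · exact order_zero.ge
  · exact h _ (coeff_order_eq_zero.not.2 hf)

end Order

variable {Γ : Type*} [AddCommGroup Γ] [LinearOrder Γ] [IsOrderedAddMonoid Γ] {k : Type*} [Field k]

theorem order_inv (f : HahnSeries Γ k) : f⁻¹.order = -f.order := by
  rcases eq_or_ne f 0 with rfl | hf
  · simp
  · have h := order_mul hf (inv_ne_zero hf)
    rw [mul_inv_cancel₀ hf, order_one] at h
    exact eq_neg_of_add_eq_zero_right h.symm

noncomputable def orderUnitsHom : (HahnSeries Γ k)ˣ →* Multiplicative Γ where
  toFun u := .ofAdd (u : HahnSeries Γ k).order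
  map_one' := by simp
  map_mul' u v := by simp [order_mul u.ne_zero v.ne_zero, ofAdd_add]

theorem orderUnitsHom_surjective : Function.Surjective (orderUnitsHom (Γ := Γ) (k := k)) :=
  fun γ => ⟨Units.mk0 (single γ.toAdd 1) (single_ne_zero one_ne_zero),
    by simp [orderUnitsHom, order_single one_ne_zero]⟩

variable (k) (S : AddSubmonoid Γ) (hS : ∀ γ, 0 ≤ γ → γ ∈ S)

/-- Contains `0` only through the convention `order 0 = 0`. -/
noncomputable def orderMemValuationSubring : ValuationSubring (HahnSeries Γ k) where
  carrier := {f | f.order ∈ S}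
  zero_mem' := by simp
  one_mem' := by simp
  add_mem' {f g} hf hg := by
    rcases eq_or_ne (f + g) 0 with h | h
    · simp [h]
    · exact S.mem_of_le hS (min_rec' (· ∈ S) hf hg) (min_order_le_order_add h)
  mul_mem' {f g} hf hg := by
    rcases eq_or_ne f 0 with rfl | hf0
    · simp
    rcases eq_or_ne g 0 with rfl | hg0
    · simp
    simpa [order_mul hf0 hg0] using S.add_mem hf hg
  neg_mem' hf := by simpa using hf
  mem_or_inv_mem' f := by
    simp only [Set.mem_ofPred_eq, order_inv]
    exact (le_total 0 f.order).imp (hS _) (fun h => hS _ (neg_nonneg.2 h))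

variable {k S hS}

theorem mem_orderMemValuationSubring {f : HahnSeries Γ k} :
    f ∈ orderMemValuationSubring k S hS ↔ f.order ∈ S := Iff.rfl

theorem mem_unitGroup_orderMemValuationSubring (u : (HahnSeries Γ k)ˣ) :
    u ∈ (orderMemValuationSubring k S hS).unitGroup ↔
      (u : HahnSeries Γ k).order ∈ S ∧ -(u : HahnSeries Γ k).order ∈ S := by
  rw [ValuationSubring.mem_unitGroup_iff_mem_and_inv_mem, mem_orderMemValuationSubring,
    mem_orderMemValuationSubring, order_inv]

variable (Γ' : AddSubgroup Γ) (hΓ' : (Γ' : Set Γ).OrdConnected)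

theorem mem_orderMemValuationSubring_nonnegUnion_iff_exists_mul_eq {x : HahnSeries Γ k} :
    x ∈ orderMemValuationSubring k (Γ'.nonnegUnion hΓ') (Γ'.nonneg_mem_nonnegUnion hΓ') ↔
      ∃ f g : HahnSeries Γ k, (∀ γ ∈ f.support, 0 ≤ γ) ∧ (∀ γ ∈ g.support, 0 ≤ γ) ∧
        g ≠ 0 ∧ g.order ∈ Γ' ∧ x * g = f := by
  constructor
  · intro hx
    by_cases h0 : 0 ≤ x.order
    · refine ⟨x, 1, support_nonneg_iff.2 h0, support_nonneg_iff.2 order_one.ge, one_ne_zero, ?_,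
        mul_one x⟩
      rw [order_one]
      exact Γ'.zero_mem
    have hx0 : x ≠ 0 := by
      rintro rfl
      exact h0 order_zero.ge
    have hxΓ' : x.order ∈ Γ' := hx.resolve_left h0
    refine ⟨single (-x.order) 1 * x, single (-x.order) 1, ?_, ?_, single_ne_zero one_ne_zero, ?_,
      mul_comm _ _⟩
    · rw [support_nonneg_iff, order_single_mul_of_isRegular isRegular_one hx0, neg_add_cancel]
    · rw [support_nonneg_iff, order_single one_ne_zero, neg_nonneg]
      exact (not_le.1 h0).le
    · rw [order_single one_ne_zero]
      exact Γ'.neg_mem hxΓ'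
  · rintro ⟨f, g, hf, -, hg0, hg, rfl⟩
    rw [(mul_inv_cancel_right₀ hg0 x).symm]
    refine mul_mem (Or.inl (support_nonneg_iff.1 hf)) (Or.inr ?_)
    rw [order_inv]
    exact Γ'.neg_mem hg

theorem unitGroup_orderMemValuationSubring_nonnegUnion :
    (orderMemValuationSubring k (Γ'.nonnegUnion hΓ') (Γ'.nonneg_mem_nonnegUnion hΓ')).unitGroup =
      ((QuotientAddGroup.mk' Γ').toMultiplicative.comp orderUnitsHom).ker := by
  ext u
  rw [mem_unitGroup_orderMemValuationSubring, Γ'.mem_and_neg_mem_nonnegUnion_iff hΓ',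
    MonoidHom.mem_ker]
  simp [orderUnitsHom]

end HahnSeries

open HahnSeries in
/-- Let `Γ` be a totally ordered abelian group, `Γ'` a convex subgroup with
quotient `Γ'' = Γ/Γ'`, and `k` a field.  The localization of the generalized power series ring
`k[[Γ]]` at the prime ideal `p_{Γ'}` is a valuation ring of `k((Γ)) = HahnSeries Γ k`:
concretely it consists of all Laurent series whose minimal support element lies in
`Γ_{≥0} ∪ Γ'`; it equals the set of quotients `f/g` with `f, g ∈ k[[Γ]]`, `g ∉ p_{Γ'}`;
and its value group `k((Γ))ˣ / unitGroup` is isomorphic to `Γ'' = Γ ⧸ Γ'` via the map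
induced by `f ↦ f.order`. -/
theorem localization_powerSeries_valuationSubring (k : Type*) [Field k] {Γ : Type*}
    [AddCommGroup Γ] [LinearOrder Γ] [IsOrderedAddMonoid Γ] (Γ' : AddSubgroup Γ)
    (hconv : ∀ a ∈ Γ', ∀ b ∈ Γ', ∀ c : Γ, a < c → c < b → c ∈ Γ') :
    ∃ V : ValuationSubring (HahnSeries Γ k),
      -- V consists of the Laurent series with minimal support element in Γ_{≥0} ∪ Γ'
      (∀ f : HahnSeries Γ k, f ∈ V ↔ (f = 0 ∨ 0 ≤ f.order ∨ f.order ∈ Γ')) ∧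
      -- V is the localization of k[[Γ]] at p_{Γ'}
      (∀ x : HahnSeries Γ k, x ∈ V ↔
        ∃ f g : HahnSeries Γ k,
          (∀ γ ∈ f.support, 0 ≤ γ) ∧ (∀ γ ∈ g.support, 0 ≤ γ) ∧
          g ≠ 0 ∧ g.order ∈ Γ' ∧ x * g = f) ∧
      -- the value group of V is Γ'' = Γ ⧸ Γ'
      ∃ e : ((HahnSeries Γ k)ˣ ⧸ V.unitGroup) ≃* Multiplicative (Γ ⧸ Γ'),
        ∀ u : (HahnSeries Γ k)ˣ,
          e (QuotientGroup.mk u) =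
            Multiplicative.ofAdd (QuotientAddGroup.mk' Γ' (u : HahnSeries Γ k).order) := by
  have hΓ' : (Γ' : Set Γ).OrdConnected :=
    Set.ordConnected_of_Ioo fun a ha b hb _ c hc => hconv a ha b hb c hc.1 hc.2
  have hφ : Function.Surjective ((QuotientAddGroup.mk' Γ').toMultiplicative.comp
      (orderUnitsHom (Γ := Γ) (k := k))) :=
    (QuotientAddGroup.mk'_surjective Γ').comp orderUnitsHom_surjective
  refine ⟨orderMemValuationSubring k (Γ'.nonnegUnion hΓ') (Γ'.nonneg_mem_nonnegUnion hΓ'),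
    fun f => ?_, fun x => mem_orderMemValuationSubring_nonnegUnion_iff_exists_mul_eq Γ' hΓ',
    (QuotientGroup.quotientMulEquivOfEq
      (unitGroup_orderMemValuationSubring_nonnegUnion Γ' hΓ')).trans
        (QuotientGroup.quotientKerEquivOfSurjective _ hφ), fun u => rfl⟩
  rw [mem_orderMemValuationSubring, AddSubgroup.mem_nonnegUnion]
  refine (or_iff_right_of_imp ?_).symm
  rintro rfl
  exact Or.inl order_zero.ge
end

section
/- Let Γ be a totally ordered abelian group with fixed isomorphism j: Γ ≅ ℤⁿ, and let Ω¹_top(ℂ[[Γ]]/ℂ) be the quotient of ℂ[[Γ]] ⊗_ℂ ℂ[[Γ]] by the submodule generated by the elements 1⊗f − Σᵢ (∂f/∂z_i)⊗z_i. Then Ω¹_top(ℂ[[Γ]]/ℂ) is a free ℂ[[Γ]]-module of rank n with basis dz₁,…,dz_n, where dz_i is the class of 1⊗z_i. -/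
/-! The maps `f ⊗ g ↦ f · ∂g/∂z_i` assemble into an `R`-linear map `R ⊗_ℂ R → Rⁿ`. Since
`∂z_j/∂z_i = δ_ij` it kills every relation `1 ⊗ f − Σᵢ ∂f/∂z_i ⊗ z_i`, and `c ↦ Σᵢ cᵢ ⊗ z_i`
is a right inverse of it. Conversely, modulo the relations, `f ⊗ g = f · (1 ⊗ g)` is congruent
to `Σᵢ f ∂g/∂z_i ⊗ z_i`, so that right inverse is onto the quotient. Hence the quotient is `Rⁿ`,
with the class of `1 ⊗ z_i` corresponding to the `i`-th standard basis vector. -/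

open scoped TensorProduct

noncomputable section

variable (Γ : Type*) [AddCommGroup Γ] [LinearOrder Γ] [IsOrderedAddMonoid Γ]

/-- The generalized Laurent series field `ℂ((Γ))` (Hahn series with well-ordered support). -/
abbrev LaurentField : Type _ := HahnSeries Γ ℂ

/-- `ℂ((Γ)) ⊗_ℂ ℂ((Γ))`, regarded as a module over `ℂ((Γ))` via the first tensor factor. -/
abbrev TensorSq : Type _ := LaurentField Γ ⊗[ℂ] LaurentField Γ

lemma HahnSeries.isLinearMap_of_coeff_eq_mul_coeff_add {Γ R : Type*} [PartialOrder Γ] [Add Γ]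
    [CommSemiring R] {D : HahnSeries Γ R → HahnSeries Γ R} {c : Γ → R} {δ : Γ}
    (hD : ∀ f γ, (D f).coeff γ = c γ * f.coeff (γ + δ)) : IsLinearMap R D where
  map_add f g := by ext γ; simp [hD, mul_add]
  map_smul r f := by ext γ; simp [hD, mul_left_comm]

lemma HahnSeries.apply_single_pi_single {Γ R ι : Type*} [AddCommGroup Γ] [PartialOrder Γ]
    [Ring R] [DecidableEq ι] (e : Γ ≃+ (ι → ℤ))
    {D : HahnSeries Γ R → HahnSeries Γ R} (i : ι)
    (hD : ∀ f γ, (D f).coeff γ = ((e γ i + 1 : ℤ) : R) * f.coeff (γ + e.symm (Pi.single i 1)))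
    (j : ι) : D (single (e.symm (Pi.single j 1)) 1) = (Pi.single j 1 : ι → HahnSeries Γ R) i := by
  ext γ
  rw [hD, coeff_single]
  by_cases hij : i = j
  · subst hij
    split_ifs with h <;> simp_all [coeff_one]
  · rw [Pi.single_eq_of_ne hij, coeff_zero]
    split_ifs with h
    · have : e γ i = -1 := by
        simp [eq_sub_of_add_eq h, hij]
      simp [this]
    · simp

namespace TopologicalKaehler

open TensorProduct

variable {k R ι : Type*} [CommRing k] [CommRing R] [Algebra k R]
variable (D : ι → R →ₗ[k] R) (z : ι → R)

def relations [Fintype ι] : Submodule R (R ⊗[k] R) :=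
  Submodule.span R {x | ∃ f : R, x = 1 ⊗ₜ[k] f - ∑ i, D i f ⊗ₜ[k] z i}

def partials : R ⊗[k] R →ₗ[R] ι → R :=
  AlgebraTensorModule.lift (LinearMap.toSpanSingleton R _ (LinearMap.pi D))

@[simp]
lemma partials_tmul (f g : R) : partials D (f ⊗ₜ[k] g) = f • fun i => D i g := rfl

variable [Fintype ι]

def combination : (ι → R) →ₗ[R] R ⊗[k] R :=
  Fintype.linearCombination R (M := R ⊗[k] R) fun i => 1 ⊗ₜ[k] z i

lemma combination_apply (c : ι → R) : combination z c = ∑ i, c i ⊗ₜ[k] z i := by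
  simp [combination, Fintype.linearCombination_apply, smul_tmul']

lemma sub_combination_partials_mem_relations (x : R ⊗[k] R) :
    x - combination z (partials D x) ∈ relations D z := by
  induction x using TensorProduct.induction_on with
  | zero => simp
  | add x y hx hy =>
    rw [map_add, map_add, add_sub_add_comm]
    exact add_mem hx hy
  | tmul f g =>
    have hgen : 1 ⊗ₜ[k] g - ∑ i, D i g ⊗ₜ[k] z i ∈ relations D z :=
      Submodule.subset_span ⟨g, rfl⟩
    convert (relations D z).smul_mem f hgen using 1
    simp [combination_apply, smul_sub, Finset.smul_sum, smul_tmul']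

variable [DecidableEq ι] {D z}

lemma partials_combination (hDz : ∀ i j, D i (z j) = (Pi.single j 1 : ι → R) i) (c : ι → R) :
    partials D (combination z c) = c := by
  ext i
  simp [combination, Fintype.linearCombination_apply, hDz, Pi.single_apply]

lemma relations_le_ker_partials (hDz : ∀ i j, D i (z j) = (Pi.single j 1 : ι → R) i) :
    relations D z ≤ LinearMap.ker (partials D) := by
  refine Submodule.span_le.mpr ?_
  rintro _ ⟨f, rfl⟩
  rw [SetLike.mem_coe, LinearMap.mem_ker, ← combination_apply, map_sub, partials_combination hDz,
    partials_tmul, one_smul, sub_self]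

def quotientEquiv (hDz : ∀ i j, D i (z j) = (Pi.single j 1 : ι → R) i) :
    (R ⊗[k] R ⧸ relations D z) ≃ₗ[R] (ι → R) :=
  LinearEquiv.ofLinearMap ((relations D z).liftQ (partials D) (relations_le_ker_partials hDz))
    ((relations D z).mkQ ∘ₗ combination z)
    (LinearMap.ext (partials_combination hDz))
    (Submodule.linearMap_qext _ <| LinearMap.ext fun x => by
      simpa [eq_comm, Submodule.Quotient.eq] using sub_combination_partials_mem_relations D z x)

def basis (hDz : ∀ i j, D i (z j) = (Pi.single j 1 : ι → R) i) :
    Module.Basis ι R (R ⊗[k] R ⧸ relations D z) :=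
  (Pi.basisFun R ι).map (quotientEquiv hDz).symm

lemma basis_apply (hDz : ∀ i j, D i (z j) = (Pi.single j 1 : ι → R) i) (i : ι) :
    basis hDz i = Submodule.Quotient.mk (1 ⊗ₜ[k] z i) := by
  simp [basis, quotientEquiv, combination, Fintype.linearCombination_apply_single]

end TopologicalKaehler

/-- With a fixed isomorphism `e : Γ ≅ ℤⁿ`, `z_i = z^{e⁻¹(1_i)}`, `D i`
formal partial differentiation `∂/∂z_i`, and `M_FD ⊆ R ⊗_ℂ R` (`R = ℂ((Γ))`) the submodule
generated by the elements `1 ⊗ f − Σᵢ (∂f/∂z_i) ⊗ z_i`, the topological Kähler differentials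
`Ω¹_top(ℂ((Γ))/ℂ) = (R ⊗_ℂ R)/M_FD` form a free `R`-module of rank `n` with basis
`dz₁, …, dz_n`, where `dz_i` is the class of `1 ⊗ z_i`. -/
theorem topological_kaehler_free_of_rank_n {n : ℕ}
    (e : Γ ≃+ (Fin n → ℤ))
    (D : Fin n → LaurentField Γ → LaurentField Γ)
    (hD : ∀ (i : Fin n) (f : LaurentField Γ) (γ : Γ),
      (D i f).coeff γ = ((e γ i + 1 : ℤ) : ℂ) * f.coeff (γ + e.symm (Pi.single i 1)))
    (MFD : @Submodule (LaurentField Γ) (TensorSq Γ) _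
      (@AddCommGroup.toAddCommMonoid _ inferInstance) inferInstance)
    (hMFD : MFD = Submodule.span (LaurentField Γ)
      {x | ∃ f : LaurentField Γ, x = 1 ⊗ₜ[ℂ] f -
        ∑ i : Fin n, (D i f) ⊗ₜ[ℂ] (HahnSeries.single (e.symm (Pi.single i 1)) (1 : ℂ))}) :
    ∃ b : Module.Basis (Fin n) (LaurentField Γ) (TensorSq Γ ⧸ MFD),
      ∀ i : Fin n, b i =
        Submodule.Quotient.mk
          (1 ⊗ₜ[ℂ] (HahnSeries.single (e.symm (Pi.single i 1)) (1 : ℂ))) := by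
  let Dₗ : Fin n → LaurentField Γ →ₗ[ℂ] LaurentField Γ := fun i =>
    IsLinearMap.mk' (D i) (HahnSeries.isLinearMap_of_coeff_eq_mul_coeff_add (hD i))
  have hDₗz : ∀ i j, Dₗ i (HahnSeries.single (e.symm (Pi.single j 1)) 1) =
      (Pi.single j 1 : Fin n → LaurentField Γ) i :=
    fun i j => HahnSeries.apply_single_pi_single e i (hD i) j
  have hrel : MFD = TopologicalKaehler.relations Dₗ
      (fun j => HahnSeries.single (e.symm (Pi.single j 1)) (1 : ℂ)) := hMFD
  subst hrel
  exact ⟨TopologicalKaehler.basis hDₗz, TopologicalKaehler.basis_apply hDₗz⟩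

end
end
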